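/- Let HS1(t) = (1+t^2)*(1 + 17t^2 + 48t^4 + 17t^6 + t^8)/(1-t^2)^10 and HS5(t) = (1 + 3t^2 + 13t^4 + 25t^6 + 46t^8 + 48t^10 + 46t^12 + 25t^14 + 13t^16 + 3t^18 + t^20)/((1-t^2)^5 (1-t^4)^5). Then lim_{t->1} HS1(t)/HS5(t) = 24. -/

import Mathlib

/-!
Since `1 - t⁴ = (1 - t²)(1 + t²)`, the pole `(1 - t²)¹⁰` of HS1 cancels against the denominator
of HS5, and away from `t = ±1` the ratio is `(1 + t²)⁶ P(t) / Q(t)`, where `P` is the octic factor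
of the numerator of HS1 and `Q`, the numerator of HS5, has positive coefficients and only even
powers, hence no real zeros. The limit is the value at `t = 1`, namely `2⁶ · 84 / 224 = 24`.
-/

open Filter Topology

theorem div_div_pow_mul_pow_eq {K : Type*} [Field K] (a c x y : K) (hx : x ≠ 0) :
    a / x ^ 10 / (c / (x ^ 5 * (x * y) ^ 5)) = a * y ^ 5 / c := by
  field_simp

theorem eventually_one_sub_sq_ne_zero : ∀ᶠ t in 𝓝[≠] (1 : ℝ), 1 - t ^ 2 ≠ 0 := by
  filter_upwards [nhdsWithin_le_nhds (lt_mem_nhds zero_lt_one), self_mem_nhdsWithin]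
    with t ht_pos ht_ne
  rw [sub_ne_zero, ne_comm]
  exact fun h => ht_ne ((pow_eq_one_iff_of_nonneg ht_pos.le two_ne_zero).mp h)

theorem volume_ratio_D4_P4 :
    Tendsto (fun t : ℝ =>
        ((1 + t^2) * (1 + 17*t^2 + 48*t^4 + 17*t^6 + t^8) / (1 - t^2)^10) /
        ((1 + 3*t^2 + 13*t^4 + 25*t^6 + 46*t^8 + 48*t^10 + 46*t^12
            + 25*t^14 + 13*t^16 + 3*t^18 + t^20) /
          ((1 - t^2)^5 * (1 - t^4)^5)))
      (nhdsWithin 1 {(1 : ℝ)}ᶜ) (nhds 24) := by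
  have hQ : ∀ t : ℝ, 1 + 3*t^2 + 13*t^4 + 25*t^6 + 46*t^8 + 48*t^10 + 46*t^12
      + 25*t^14 + 13*t^16 + 3*t^18 + t^20 ≠ 0 := fun t => by positivity
  have h_cont : Continuous (fun t : ℝ => (1 + t^2) * (1 + 17*t^2 + 48*t^4 + 17*t^6 + t^8) *
      (1 + t^2) ^ 5 / (1 + 3*t^2 + 13*t^4 + 25*t^6 + 46*t^8 + 48*t^10 + 46*t^12
        + 25*t^14 + 13*t^16 + 3*t^18 + t^20)) :=
    Continuous.div (by fun_prop) (by fun_prop) hQ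
  have h_lim := h_cont.tendsto 1
  norm_num at h_lim
  refine (h_lim.mono_left nhdsWithin_le_nhds).congr' ?_
  filter_upwards [eventually_one_sub_sq_ne_zero] with t ht
  rw [show (1 : ℝ) - t ^ 4 = (1 - t ^ 2) * (1 + t ^ 2) by ring, div_div_pow_mul_pow_eq _ _ _ _ ht]
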